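/- Let K ≥ 2 and let η : {1,…,K} × {1,…,K} → (0,∞) satisfy: for every L ≥ 1 and all j_1,…,j_L ∈ {1,…,K}, the cyclic product η_{j_1→j_2} ⋯ η_{j_L→j_1} ≥ 1. Fix k ∈ {1,…,K}, set edge weights w(j,ℓ) = log η_{j→ℓ}, let m(ℓ) = min(ℓ→k) be the minimum weight over simple walks from ℓ to k (with m(k) = 0), and define θ* ∈ Δ by θ*_ℓ = exp(−m(ℓ)) / Σ_{ℓ'=1}^K exp(−m(ℓ')). Then θ* satisfies all the constraints: θ*_i ≤ η_{j→i} · θ*_j for all i, j ∈ {1,…,K}. -/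

import Mathlib

noncomputable section

/-- The weight of the walk `j 0, j 1, …, j m` for edge weights `w`. -/
def walkWeight (K : ℕ) (w : Fin K → Fin K → ℝ) (m : ℕ) (j : Fin (m + 1) → Fin K) : ℝ :=
  ∑ i : Fin m, w (j i.castSucc) (j i.succ)

/-- The minimum weight over simple walks (pairwise distinct vertices) from `a` to `b`. -/
def minWalk (K : ℕ) (w : Fin K → Fin K → ℝ) (a b : Fin K) : ℝ :=
  sInf {v : ℝ | ∃ (m : ℕ) (j : Fin (m + 1) → Fin K),
    j 0 = a ∧ j (Fin.last m) = b ∧ Function.Injective j ∧ v = walkWeight K w m j}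


open Finset Real

/-!
Taking logarithms, the cycle condition says that the weights `w = log η` have no negative cycle.
Then `m` is a potential: `m j ≤ w j i + m i`. Indeed, prepend `j` to a simple walk from `i` to
`k`; if `j` already lies on that walk, cutting off the closed walk up to its occurrence drops a
cycle of nonnegative weight and leaves a simple walk from `j`. Exponentiating gives
`θ i ≤ η j i * θ j`.
-/

def NoNegCycle {K : ℕ} (w : Fin K → Fin K → ℝ) : Prop :=
  ∀ (L : ℕ) (c : Fin (L + 1) → Fin K), 0 ≤ ∑ i, w (c i) (c (i + 1))

theorem noNegCycle_log {K : ℕ} {η : Fin K → Fin K → ℝ} (hpos : ∀ k ℓ, 0 < η k ℓ)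
    (hcyc : ∀ (L : ℕ) (j : Fin (L + 1) → Fin K), 1 ≤ ∏ i : Fin (L + 1), η (j i) (j (i + 1))) :
    NoNegCycle fun a b => log (η a b) := fun L c => by
  simpa [log_prod fun i _ => (hpos _ _).ne'] using log_nonneg (hcyc L c)

theorem exists_seq_cons {α : Type*} {n : ℕ} (a : α) (p : Fin (n + 1) → α) :
    ∃ q : ℕ → α, q 0 = a ∧ p = fun t : Fin (n + 1) => q (t + 1) :=
  ⟨fun t => Nat.casesOn t a fun s => if h : s < n + 1 then p ⟨s, h⟩ else a, rfl,
    funext fun t : Fin (n + 1) => by simp [t.isLt]⟩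

section Walks

variable {K : ℕ} (w : Fin K → Fin K → ℝ)

theorem walkWeight_eq_sum_range (m : ℕ) (q : ℕ → Fin K) :
    walkWeight K w m (fun t => q t) = ∑ t ∈ range m, w (q t) (q (t + 1)) := by
  simp [walkWeight, ← Fin.sum_univ_eq_sum_range (fun t => w (q t) (q (t + 1)))]

theorem bddBelow_simpleWalkWeights (a b : Fin K) :
    BddBelow {v : ℝ | ∃ (m : ℕ) (j : Fin (m + 1) → Fin K),
      j 0 = a ∧ j (Fin.last m) = b ∧ Function.Injective j ∧ v = walkWeight K w m j} := by
  refine Set.Finite.bddBelow <|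
    ((Set.finite_Iio K).biUnion fun m _ => Set.finite_range (walkWeight K w m)).subset ?_
  rintro _ ⟨m, j, -, -, hj, rfl⟩
  have hmK : m + 1 ≤ K := by simpa using Fintype.card_le_of_injective j hj
  exact Set.mem_biUnion (show m < K by omega) ⟨j, rfl⟩

theorem simpleWalkWeights_nonempty (a b : Fin K) :
    {v : ℝ | ∃ (m : ℕ) (j : Fin (m + 1) → Fin K),
      j 0 = a ∧ j (Fin.last m) = b ∧ Function.Injective j ∧ v = walkWeight K w m j}.Nonempty := by
  rcases eq_or_ne a b with rfl | hab
  · exact ⟨_, 0, fun _ => a, rfl, rfl, fun x y _ => Fin.ext (by omega), rfl⟩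
  · refine ⟨_, 1, ![a, b], rfl, rfl, ?_, rfl⟩
    intro x y hxy
    fin_cases x <;> fin_cases y <;> simp_all

theorem minWalk_le_sum_range_of_injOn {q : ℕ → Fin K} {m : ℕ} (hq : Set.InjOn q (Set.Iic m)) :
    minWalk K w (q 0) (q m) ≤ ∑ t ∈ range m, w (q t) (q (t + 1)) := by
  refine csInf_le (bddBelow_simpleWalkWeights w _ _)
    ⟨m, fun t => q t, rfl, rfl, fun a b hab => Fin.ext ?_, (walkWeight_eq_sum_range w m q).symm⟩
  exact hq (Set.mem_Iic.2 (Nat.lt_succ_iff.1 a.2)) (Set.mem_Iic.2 (Nat.lt_succ_iff.1 b.2)) hab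

end Walks

namespace NoNegCycle

variable {K : ℕ} {w : Fin K → Fin K → ℝ}

theorem sum_range_nonneg (hw : NoNegCycle w) (q : ℕ → Fin K) {n : ℕ} (hq : q n = q 0) :
    0 ≤ ∑ t ∈ range n, w (q t) (q (t + 1)) := by
  cases n with
  | zero => simp
  | succ L =>
    refine (hw L fun i => q i).trans_eq ?_
    rw [← Fin.sum_univ_eq_sum_range (fun t => w (q t) (q (t + 1)))]
    refine sum_congr rfl fun i _ => ?_
    rw [Fin.val_add_one]
    split_ifs with hi
    · simp [hi, hq]
    · rfl

/-- If the first vertex recurs, the walk up to its return is a cycle and can be cut off. -/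
theorem minWalk_le_sum_range (hw : NoNegCycle w) {q : ℕ → Fin K} {n : ℕ}
    (hq : Set.InjOn q (Set.Ioc 0 n)) :
    minWalk K w (q 0) (q n) ≤ ∑ t ∈ range n, w (q t) (q (t + 1)) := by
  by_cases hret : q 0 ∈ q '' Set.Ioc 0 n
  · obtain ⟨c, ⟨hc0, hcn⟩, hqc⟩ := hret
    have hsuffix : Set.InjOn (fun t => q (c + t)) (Set.Iic (n - c)) :=
      hq.comp (add_right_injective c).injOn fun t ht => by
        simp only [Set.mem_Iic, Set.mem_Ioc] at ht ⊢; omega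
    have hcycle := hw.sum_range_nonneg q hqc
    have hsuffix_min := minWalk_le_sum_range_of_injOn w hsuffix
    have hsplit := sum_range_add (fun t => w (q t) (q (t + 1))) c (n - c)
    simp only [Nat.add_zero, hqc, Nat.add_sub_cancel' hcn, add_assoc] at hsuffix_min hsplit
    linarith
  · have hIic : Set.Iic n = insert 0 (Set.Ioc 0 n) := by
      ext t; simp only [Set.mem_Iic, Set.mem_insert_iff, Set.mem_Ioc]; omega
    exact minWalk_le_sum_range_of_injOn w (hIic ▸ (Set.injOn_insert (by simp)).2 ⟨hq, hret⟩)

theorem minWalk_le_add_minWalk (hw : NoNegCycle w) (i j k : Fin K) :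
    minWalk K w j k ≤ w j i + minWalk K w i k := by
  rw [← sub_le_iff_le_add']
  refine le_csInf (simpleWalkWeights_nonempty w i k) ?_
  rintro _ ⟨n, p, rfl, rfl, hp, rfl⟩
  obtain ⟨q, rfl, rfl⟩ := exists_seq_cons j p
  have hq : Set.InjOn q (Set.Ioc 0 (n + 1)) := by
    intro a ha b hb hab
    simp only [Set.mem_Ioc] at ha hb
    obtain ⟨a, rfl⟩ := Nat.exists_eq_add_one_of_ne_zero ha.1.ne'
    obtain ⟨b, rfl⟩ := Nat.exists_eq_add_one_of_ne_zero hb.1.ne'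
    simpa [Fin.ext_iff] using @hp ⟨a, by omega⟩ ⟨b, by omega⟩ hab
  have hwalk := hw.minWalk_le_sum_range hq
  rw [sum_range_succ'] at hwalk
  rw [walkWeight_eq_sum_range w n fun s => q (s + 1)]
  simp only [Fin.val_last, Fin.val_zero, zero_add] at hwalk ⊢
  linarith

end NoNegCycle

theorem stmt13 (K : ℕ) (hK : 2 ≤ K) (η : Fin K → Fin K → ℝ)
    (hpos : ∀ k ℓ, 0 < η k ℓ)
    (hcyc : ∀ (L : ℕ) (j : Fin (L + 1) → Fin K),
      1 ≤ ∏ i : Fin (L + 1), η (j i) (j (i + 1)))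
    (k : Fin K) (m : Fin K → ℝ)
    (hm : ∀ ℓ, m ℓ = minWalk K (fun a b => Real.log (η a b)) ℓ k)
    (θ : Fin K → ℝ)
    (hθ : ∀ ℓ, θ ℓ = Real.exp (-(m ℓ)) / ∑ ℓ' : Fin K, Real.exp (-(m ℓ'))) :
    θ ∈ stdSimplex ℝ (Fin K) ∧ ∀ i j, θ i ≤ η j i * θ j := by
  have hS : 0 < ∑ ℓ, exp (-m ℓ) :=
    sum_pos (fun _ _ => exp_pos _) (univ_nonempty_iff.2 ⟨⟨0, by omega⟩⟩)
  refine ⟨⟨fun ℓ => hθ ℓ ▸ by positivity, by simp_rw [hθ, ← sum_div, div_self hS.ne']⟩,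
    fun i j => ?_⟩
  have hpotential := (noNegCycle_log hpos hcyc).minWalk_le_add_minWalk i j k
  rw [← hm, ← hm] at hpotential
  rw [hθ, hθ, ← mul_div_assoc]
  gcongr
  calc exp (-m i) ≤ exp (log (η j i) + -m j) := exp_le_exp.2 (by linarith)
    _ = η j i * exp (-m j) := by rw [exp_add, exp_log (hpos j i)]
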